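/- Let k be a commutative ring, X a set, and Ω a semigroup. The dendriform family algebra DDF(X,Ω) is generated, under the operations {≺_ω, ≻_ω | ω ∈ Ω}, by the set of single-vertex trees {stree(x) | x ∈ X}, where stree(x) = | ∨_{x,(1,1)} | is the tree with one internal vertex decorated by x. That is, the smallest k-submodule of DDF(X,Ω) containing all stree(x) and closed under all operations ≺_ω and ≻_ω (ω ∈ Ω) equals DDF(X,Ω). -/

import Mathlib

/-- An `X`-decorated `Ω`-typed planar binary tree with at least one internal vertex.
`node l x r` has root vertex decorated by `x : X`; a child `none` is a leaf `|`
(its edge carries the adjoined identity type `1 ∈ Ω¹`), while a child `some (t, α)` is a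
nonempty subtree `t` whose internal edge to the root is typed by `α ∈ Ω`. -/
inductive PBT (X Ω : Type) : Type where
  | node : Option (PBT X Ω × Ω) → X → Option (PBT X Ω × Ω) → PBT X Ω

namespace PBT

variable {X Ω : Type}

/-- The single-vertex tree `stree x = | ∨_{x,(1,1)} |`. -/
def stree (x : X) : PBT X Ω := .node none x none

variable [Semigroup Ω] (k : Type) [CommRing k]

mutual
/-- `T ≺_ω U` on trees (Definition of the dendriform family operations):
for `T = T^l ∨_{x,(α₁,α₂)} T^r`, `T ≺_ω U = T^l ∨_{x,(α₁,α₂ω)} (T^r ≺_ω U + T^r ≻_{α₂} U)`,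
using the conventions `| ≺_ω U = 0`, `| ≻₁ U = U` when `T^r = |`. -/
noncomputable def tprec : PBT X Ω → Ω → PBT X Ω → (PBT X Ω →₀ k)
  | .node tl x none, ω, U => Finsupp.single (.node tl x (some (U, ω))) 1
  | .node tl x (some (t, α)), ω, U =>
      Finsupp.mapDomain (fun s => PBT.node tl x (some (s, α * ω)))
        (tprec t ω U + tsucc t α U)
  termination_by T _ U => sizeOf T + sizeOf U
  decreasing_by all_goals (simp_wf; omega)

/-- `T ≻_ω U` on trees: for `U = U^l ∨_{y,(β₁,β₂)} U^r`,
`T ≻_ω U = (T ≺_{β₁} U^l + T ≻_ω U^l) ∨_{y,(ωβ₁,β₂)} U^r`,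
using the conventions `T ≻_ω | = 0`, `T ≺₁ | = T` when `U^l = |`. -/
noncomputable def tsucc : PBT X Ω → Ω → PBT X Ω → (PBT X Ω →₀ k)
  | T, ω, .node none y ur => Finsupp.single (.node (some (T, ω)) y ur) 1
  | T, ω, .node (some (u, β)) y ur =>
      Finsupp.mapDomain (fun s => PBT.node (some (s, ω * β)) y ur)
        (tprec T β u + tsucc T ω u)
  termination_by T _ U => sizeOf T + sizeOf U
  decreasing_by all_goals (simp_wf; omega)
end

/-- The bilinear extension of `≺_ω` to the free module `DDF(X,Ω) = PBT X Ω →₀ k`. -/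
noncomputable def dprec (ω : Ω) (a b : PBT X Ω →₀ k) : PBT X Ω →₀ k :=
  a.sum fun T ca => b.sum fun U cb => (ca * cb) • tprec k T ω U

/-- The bilinear extension of `≻_ω` to the free module `DDF(X,Ω) = PBT X Ω →₀ k`. -/
noncomputable def dsucc (ω : Ω) (a b : PBT X Ω →₀ k) : PBT X Ω →₀ k :=
  a.sum fun T ca => b.sum fun U cb => (ca * cb) • tsucc k T ω U

end PBT

/-! Every tree is built from single-vertex trees by grafting: `stree x ≺_β U` is the single tree
`| ∨_{x,(1,β)} U`, and `T ≻_ω (| ∨_{x,(1,β)} R)` is the single tree `T ∨_{x,(ω,β)} R`, because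
in both products the recursion stops at its base case. By induction on trees every basis vector
therefore lies in any submodule containing the `stree x` and closed under the operations. -/

namespace PBT

variable {X Ω : Type} [Semigroup Ω] (k : Type) [CommRing k]

theorem dprec_single_single (ω : Ω) (T U : PBT X Ω) :
    dprec k ω (Finsupp.single T 1) (Finsupp.single U 1) = tprec k T ω U := by
  simp [dprec]

theorem dsucc_single_single (ω : Ω) (T U : PBT X Ω) :
    dsucc k ω (Finsupp.single T 1) (Finsupp.single U 1) = tsucc k T ω U := by
  simp [dsucc]

theorem tprec_stree (x : X) (ω : Ω) (U : PBT X Ω) :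
    tprec k (stree x) ω U = Finsupp.single (node none x (some (U, ω))) 1 := by
  rw [stree, tprec.eq_def]

theorem tsucc_node_none (T : PBT X Ω) (ω : Ω) (y : X) (ur : Option (PBT X Ω × Ω)) :
    tsucc k T ω (node none y ur) = Finsupp.single (node (some (T, ω)) y ur) 1 := by
  rw [tsucc.eq_def]

theorem single_mem_of_closed (S : Submodule k (PBT X Ω →₀ k))
    (hstree : ∀ x : X, Finsupp.single (stree x) (1 : k) ∈ S)
    (hprec : ∀ (ω : Ω) (T U : PBT X Ω), Finsupp.single T (1 : k) ∈ S →
      Finsupp.single U 1 ∈ S → tprec k T ω U ∈ S)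
    (hsucc : ∀ (ω : Ω) (T U : PBT X Ω), Finsupp.single T (1 : k) ∈ S →
      Finsupp.single U 1 ∈ S → tsucc k T ω U ∈ S) :
    ∀ T : PBT X Ω, Finsupp.single T (1 : k) ∈ S
  | node l x r => by
    have hright : Finsupp.single (node none x r) (1 : k) ∈ S := by
      match r with
      | none => exact hstree x
      | some (U, ω) =>
        rw [← tprec_stree]
        exact hprec ω _ _ (hstree x) (single_mem_of_closed S hstree hprec hsucc U)
    match l with
    | none => exact hright
    | some (T, ω) =>
      rw [← tsucc_node_none]
      exact hsucc ω _ _ (single_mem_of_closed S hstree hprec hsucc T) hright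

end PBT

open PBT in
/-- The dendriform family algebra `DDF(X,Ω)` is generated, under the
operations `{≺_ω, ≻_ω | ω ∈ Ω}`, by the single-vertex trees `stree x`, `x ∈ X`: every
`k`-submodule containing all `stree x` and closed under all `≺_ω, ≻_ω` is all of
`DDF(X,Ω)`. -/
theorem DDF_generated_by_strees {X Ω : Type} [Semigroup Ω] (k : Type) [CommRing k] :
    ∀ S : Submodule k (PBT X Ω →₀ k),
      (∀ x : X, Finsupp.single (stree x) (1 : k) ∈ S) →
      (∀ (ω : Ω) (a b : PBT X Ω →₀ k), a ∈ S → b ∈ S → dprec k ω a b ∈ S) →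
      (∀ (ω : Ω) (a b : PBT X Ω →₀ k), a ∈ S → b ∈ S → dsucc k ω a b ∈ S) →
      ∀ a : PBT X Ω →₀ k, a ∈ S := by
  intro S hstree hprec hsucc
  have hbasis : ∀ T : PBT X Ω, Finsupp.single T (1 : k) ∈ S :=
    single_mem_of_closed k S hstree
      (fun ω T U hT hU => dprec_single_single k ω T U ▸ hprec ω _ _ hT hU)
      (fun ω T U hT hU => dsucc_single_single k ω T U ▸ hsucc ω _ _ hT hU)
  have hspan : Submodule.span k (Set.range fun T : PBT X Ω => Finsupp.single T (1 : k)) = ⊤ := by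
    simpa only [Finsupp.coe_basisSingleOne] using (Finsupp.basisSingleOne (R := k)).span_eq
  intro a
  exact Submodule.span_le.mpr (Set.range_subset_iff.mpr hbasis) (hspan ▸ Submodule.mem_top)
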